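/- Let ω be a nondegenerate alternating bilinear form on ℂ^{2n}. The set of pairs (E, F) with F ⊂ E, dim F = 1, dim E = 2, and ω|_E ≡ 0 (E isotropic), is a nonempty proper closed Sp(ω)-stable subset of the flag variety {(E,F) : F ⊂ E, dim F = 1, dim E = 2}, and it is also a single Sp(ω)-orbit. -/

import Mathlib

/-!
The key point is Witt's extension theorem in the case needed here: a linearly independent pair
`(v, w)` with `ω v w = 0` can be completed to `v, w, u, z` with the standard symplectic Gram
matrix. That matrix is invertible, so the span `U` of the four vectors is nondegenerate and
`V = U ⊕ U^⊥`. Two such completions are matched by the isometry sending one basis of `U` to the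
other, glued with an isometry between the orthogonal complements, which exists because
nondegenerate alternating forms of the same dimension are isometric (split off a hyperbolic plane
and induct). Since every isotropic flag is spanned by such a pair, `Sp(ω)` is transitive on them.

The remaining claims are direct: isometries preserve isotropy, `ker (ω v)` has dimension
`2n - 1 > 1` so it contains a vector outside `ℂ v`, a hyperbolic pair `ω v u = 1` spans a flag
that is not isotropic, and the set in the chart is the zero set of the continuous map `ω`.
-/

open Module Submodule

section Flag

variable {K V V' : Type*} [Field K] [AddCommGroup V] [Module K V] [AddCommGroup V'] [Module K V']

def IsLineInPlane (F E : Submodule K V) : Prop :=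
  F ≤ E ∧ finrank K F = 1 ∧ finrank K E = 2

theorem isLineInPlane_span_pair {v w : V} (h : LinearIndependent K ![v, w]) :
    IsLineInPlane (span K {v}) (span K (Set.range ![v, w])) :=
  ⟨span_le.2 (Set.singleton_subset_iff.2 (subset_span ⟨0, rfl⟩)),
    finrank_span_singleton (h.ne_zero 0), by simp [finrank_span_eq_card h]⟩

theorem IsLineInPlane.map {F E : Submodule K V} (h : IsLineInPlane F E) (g : V ≃ₗ[K] V') :
    IsLineInPlane (F.map (g : V →ₗ[K] V')) (E.map (g : V →ₗ[K] V')) :=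
  ⟨map_mono h.1, by rw [LinearEquiv.finrank_map_eq, h.2.1],
    by rw [LinearEquiv.finrank_map_eq, h.2.2]⟩

theorem IsLineInPlane.exists_linearIndependent [FiniteDimensional K V] {F E : Submodule K V}
    (h : IsLineInPlane F E) : ∃ v w : V, LinearIndependent K ![v, w] ∧
      F = span K {v} ∧ E = span K (Set.range ![v, w]) := by
  obtain ⟨hFE, hF, hE⟩ := h
  obtain ⟨v, hvF, hv⟩ := exists_mem_ne_zero_of_ne_bot (p := F) (by rintro rfl; simp at hF)
  have hFv : F = span K {v} :=
    (eq_of_le_of_finrank_le (span_le.2 (Set.singleton_subset_iff.2 hvF))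
      (by rw [hF, finrank_span_singleton hv])).symm
  obtain ⟨w, hwE, hwF⟩ := SetLike.exists_of_lt (lt_of_le_of_ne hFE (by rintro rfl; omega))
  have hvw : LinearIndependent K ![v, w] := (LinearIndependent.pair_iff' hv).2 fun a ha =>
    hwF (hFv ▸ ha ▸ smul_mem _ _ (mem_span_singleton_self v))
  refine ⟨v, w, hvw, hFv, (eq_of_le_of_finrank_le ?_ ?_).symm⟩
  · exact span_le.2 (Set.range_subset_iff.2 fun i => by fin_cases i <;> simp [hFE hvF, hwE])
  · simp [hE, finrank_span_eq_card hvw]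

theorem notMem_span_singleton_of_linearIndependent {v w : V} (h : LinearIndependent K ![v, w]) :
    v ∉ span K {w} := by
  simpa [mem_span_singleton] using (linearIndependent_fin2.mp h).2

end Flag

namespace LinearMap.BilinForm

variable {K V V' ι : Type*} [Field K] [AddCommGroup V] [Module K V] [AddCommGroup V'] [Module K V']

def gram (B : LinearMap.BilinForm K V) (s : ι → V) : Matrix ι ι K :=
  Matrix.of fun i j => B (s i) (s j)

section Gram

variable [Fintype ι] [DecidableEq ι] {B : LinearMap.BilinForm K V} {s : ι → V}

theorem linearIndependent_of_det_gram_ne_zero (h : (B.gram s).det ≠ 0) :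
    LinearIndependent K s := by
  rw [Fintype.linearIndependent_iff]
  intro c hc
  have hvec : Matrix.vecMul c (B.gram s) = 0 := by
    ext j
    simpa [Matrix.vecMul, dotProduct, gram, map_sum] using congrArg (B · (s j)) hc
  have : c = 0 := by
    by_contra hc0
    exact h (Matrix.exists_vecMul_eq_zero_iff.1 ⟨c, hc0, hvec⟩)
  exact congrFun this

theorem nondegenerate_restrict_span_of_det_gram_ne_zero (h : (B.gram s).det ≠ 0) :
    (B.restrict (span K (Set.range s))).Nondegenerate := by
  rw [nondegenerate_iff_det_ne_zero (Basis.span (linearIndependent_of_det_gram_ne_zero h))]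
  convert h using 2
  ext i j
  simp [gram, Basis.span_apply]

theorem finrank_orthogonal_span_of_det_gram_ne_zero [FiniteDimensional K V]
    (hB : B.Nondegenerate) (h : (B.gram s).det ≠ 0) :
    finrank K (B.orthogonal (span K (Set.range s))) = finrank K V - Fintype.card ι := by
  rw [finrank_orthogonal hB, finrank_span_eq_card (linearIndependent_of_det_gram_ne_zero h)]

end Gram

section Glue

variable {B : LinearMap.BilinForm K V} {B' : LinearMap.BilinForm K V'}

theorem exists_isometry_span_of_gram_eq {s : ι → V} {s' : ι → V'}
    (hs : LinearIndependent K s) (hs' : LinearIndependent K s') (h : B'.gram s' = B.gram s) :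
    ∃ g : span K (Set.range s) ≃ₗ[K] span K (Set.range s'),
      (∀ x y, B' (g x) (g y) = B x y) ∧
      ∀ i, (g ⟨s i, subset_span (Set.mem_range_self i)⟩ : V') = s' i := by
  let b := Basis.span hs
  let b' := Basis.span hs'
  let g := b.equiv b' (Equiv.refl ι)
  have hg : ∀ i, g (b i) = b' i := fun i => b.equiv_apply i b' (Equiv.refl ι)
  have hB : (B'.restrict (span K (Set.range s'))).compl₁₂ g.toLinearMap g.toLinearMap =
      B.restrict (span K (Set.range s)) :=
    ext_basis b fun i j => by
      change B' (g (b i)) (g (b j)) = B (b i) (b j)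
      rw [hg, hg]
      simpa [b, b', Basis.span_apply, gram] using congrFun₂ h i j
  refine ⟨g, fun x y => congrArg (· x y) hB, fun i => ?_⟩
  have : (⟨s i, subset_span (Set.mem_range_self i)⟩ : span K (Set.range s)) = b i := by
    ext; simp [b, Basis.span_apply]
  rw [this, hg]
  simp [b', Basis.span_apply]

theorem apply_add_add_of_mem_orthogonal (hB : B.IsRefl) {W : Submodule K V} {a b c d : V}
    (ha : a ∈ W) (hc : c ∈ W) (hb : b ∈ B.orthogonal W) (hd : d ∈ B.orthogonal W) :
    B (a + b) (c + d) = B a c + B b d := by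
  have hbc : B b c = 0 := hB _ _ (hb c hc)
  have had : B a d = 0 := hd a ha
  simp [hbc, had]

theorem exists_isometry_of_isCompl_orthogonal (hB : B.IsRefl) (hB' : B'.IsRefl)
    {W : Submodule K V} {W' : Submodule K V'}
    (hW : IsCompl W (B.orthogonal W)) (hW' : IsCompl W' (B'.orthogonal W'))
    (g₁ : W ≃ₗ[K] W') (hg₁ : ∀ x y, B' (g₁ x) (g₁ y) = B x y)
    (g₂ : B.orthogonal W ≃ₗ[K] B'.orthogonal W')
    (hg₂ : ∀ x y, B' (g₂ x) (g₂ y) = B x y) :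
    ∃ g : V ≃ₗ[K] V', (∀ x y, B' (g x) (g y) = B x y) ∧ ∀ x : W, g x = g₁ x := by
  let e := prodEquivOfIsCompl _ _ hW
  let e' := prodEquivOfIsCompl _ _ hW'
  let g := e.symm.trans ((g₁.prodCongr g₂).trans e')
  have hge : ∀ p, g (e p) = g₁ p.1 + g₂ p.2 := fun p => by
    simp [g, e', coe_prodEquivOfIsCompl']
  refine ⟨g, fun x y => ?_, fun x => ?_⟩
  · obtain ⟨p, rfl⟩ := e.surjective x
    obtain ⟨q, rfl⟩ := e.surjective y
    rw [hge, hge,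
      apply_add_add_of_mem_orthogonal hB' (g₁ p.1).2 (g₁ q.1).2 (g₂ p.2).2 (g₂ q.2).2,
      coe_prodEquivOfIsCompl', coe_prodEquivOfIsCompl',
      apply_add_add_of_mem_orthogonal hB p.1.2 q.1.2 p.2.2 q.2.2, hg₁, hg₂]
  · have hx : e (x, 0) = x := by simp [e, coe_prodEquivOfIsCompl']
    simpa [hx] using hge (x, 0)

theorem exists_isometry_of_gram_eq [Fintype ι] [DecidableEq ι] [FiniteDimensional K V]
    [FiniteDimensional K V'] (hB : B.IsRefl) (hB' : B'.IsRefl)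
    {s : ι → V} {s' : ι → V'} (hs : (B.gram s).det ≠ 0) (h : B'.gram s' = B.gram s)
    (g₂ : B.orthogonal (span K (Set.range s)) ≃ₗ[K] B'.orthogonal (span K (Set.range s')))
    (hg₂ : ∀ x y, B' (g₂ x) (g₂ y) = B x y) :
    ∃ g : V ≃ₗ[K] V', (∀ x y, B' (g x) (g y) = B x y) ∧ ∀ i, g (s i) = s' i := by
  have hs' : (B'.gram s').det ≠ 0 := h ▸ hs
  obtain ⟨g₁, hg₁, hg₁s⟩ := exists_isometry_span_of_gram_eq
    (linearIndependent_of_det_gram_ne_zero hs) (linearIndependent_of_det_gram_ne_zero hs') h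
  obtain ⟨g, hg, hgg₁⟩ := exists_isometry_of_isCompl_orthogonal hB hB'
    (isCompl_orthogonal_of_restrict_nondegenerate hB
      (nondegenerate_restrict_span_of_det_gram_ne_zero hs))
    (isCompl_orthogonal_of_restrict_nondegenerate hB'
      (nondegenerate_restrict_span_of_det_gram_ne_zero hs')) g₁ hg₁ g₂ hg₂
  exact ⟨g, hg, fun i => (hgg₁ _).trans (hg₁s i)⟩

end Glue

section Nondegenerate

variable [FiniteDimensional K V] {B : LinearMap.BilinForm K V}

theorem nondegenerate_restrict_orthogonal (hB : B.Nondegenerate) (hr : B.IsRefl)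
    {W : Submodule K V} (hW : (B.restrict W).Nondegenerate) :
    (B.restrict (B.orthogonal W)).Nondegenerate := by
  rw [restrict_nondegenerate_iff_isCompl_orthogonal hr, orthogonal_orthogonal hB hr]
  exact (isCompl_orthogonal_of_restrict_nondegenerate hr hW).symm

theorem exists_mem_orthogonal_apply_eq_one (hB : B.Nondegenerate) (hr : B.IsRefl)
    {W : Submodule K V} {v : V} (hv : v ∉ W) : ∃ u ∈ B.orthogonal W, B v u = 1 := by
  by_contra! h
  refine hv ?_
  rw [← orthogonal_orthogonal hB hr W]
  intro u hu
  refine hr _ _ (by_contra fun hvu => h ((B v u)⁻¹ • u) (smul_mem _ _ hu) ?_)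
  simp [inv_mul_cancel₀ hvu]

end Nondegenerate

section Symplectic

variable {B : LinearMap.BilinForm K V} {B' : LinearMap.BilinForm K V'}

theorem IsAlt.restrict (hB : B.IsAlt) (W : Submodule K V) : (B.restrict W).IsAlt :=
  fun x => hB x

theorem gram_pair_of_apply_eq_one (hB : B.IsAlt) {v u : V} (h : B v u = 1) :
    B.gram ![v, u] = !![0, 1; -1, 0] := by
  ext i j
  fin_cases i <;> fin_cases j <;> simp [gram, h, ← hB.neg_eq v u, hB.self_eq_zero]

theorem exists_apply_eq_one [Nontrivial V] (hBn : B.Nondegenerate) : ∃ v u : V, B v u = 1 := by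
  obtain ⟨v, hv⟩ := exists_ne (0 : V)
  obtain ⟨u, hu⟩ : ∃ u, B v u ≠ 0 := by
    by_contra! h
    exact hv (hBn.1 v h)
  exact ⟨v, (B v u)⁻¹ • u, by simp [inv_mul_cancel₀ hu]⟩

theorem exists_isometry_of_finrank_eq [FiniteDimensional K V] [FiniteDimensional K V']
    (hB : B.IsAlt) (hB' : B'.IsAlt) (hBn : B.Nondegenerate) (hBn' : B'.Nondegenerate)
    (h : finrank K V = finrank K V') : ∃ g : V ≃ₗ[K] V', ∀ x y, B' (g x) (g y) = B x y := by
  induction hk : finrank K V using Nat.strong_induction_on generalizing V V' with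
  | _ k ih =>
  rcases Nat.eq_zero_or_pos k with rfl | hk0
  · have := finrank_zero_iff.mp hk
    have := finrank_zero_iff.mp (h ▸ hk)
    exact ⟨LinearEquiv.ofFinrankEq V V' h, fun x y => by simp [Subsingleton.elim x 0]⟩
  have := finrank_pos_iff.mp (hk ▸ hk0)
  have := finrank_pos_iff.mp (h ▸ hk ▸ hk0)
  obtain ⟨v, u, hvu⟩ := exists_apply_eq_one hBn
  obtain ⟨v', u', hvu'⟩ := exists_apply_eq_one hBn'
  have hs := gram_pair_of_apply_eq_one hB hvu
  have hs' := gram_pair_of_apply_eq_one hB' hvu'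
  have hdet : (B.gram ![v, u]).det ≠ 0 := by simp [hs, Matrix.det_fin_two]
  have hdet' : (B'.gram ![v', u']).det ≠ 0 := by simp [hs', Matrix.det_fin_two]
  have hdim := finrank_orthogonal_span_of_det_gram_ne_zero hBn hdet
  have hdim' := finrank_orthogonal_span_of_det_gram_ne_zero hBn' hdet'
  obtain ⟨g₂, hg₂⟩ := ih _ (by simp at hdim; omega) (hB.restrict _) (hB'.restrict _)
    (nondegenerate_restrict_orthogonal hBn hB.isRefl
      (nondegenerate_restrict_span_of_det_gram_ne_zero hdet))
    (nondegenerate_restrict_orthogonal hBn' hB'.isRefl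
      (nondegenerate_restrict_span_of_det_gram_ne_zero hdet')) (by omega) rfl
  obtain ⟨g, hg, -⟩ :=
    exists_isometry_of_gram_eq hB.isRefl hB'.isRefl hdet (hs'.trans hs.symm) g₂ hg₂
  exact ⟨g, hg⟩

variable [FiniteDimensional K V]

theorem exists_gram_eq_of_isotropic (hB : B.IsAlt) (hBn : B.Nondegenerate) {v w : V}
    (h : LinearIndependent K ![v, w]) (hvw : B v w = 0) :
    ∃ u z : V, B.gram ![v, w, u, z] = !![0, 0, 1, 0; 0, 0, 0, 1; -1, 0, 0, 0; 0, -1, 0, 0] := by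
  obtain ⟨u, hu, hvu⟩ := exists_mem_orthogonal_apply_eq_one hBn hB.isRefl
    (notMem_span_singleton_of_linearIndependent h)
  obtain ⟨z, hz, hwz⟩ := exists_mem_orthogonal_apply_eq_one hBn hB.isRefl
    (notMem_span_singleton_of_linearIndependent (LinearIndependent.pair_symm_iff.mp h))
  have hwu : B w u = 0 := hu w (mem_span_singleton_self w)
  have hvz : B v z = 0 := hz v (mem_span_singleton_self v)
  -- correct `z` by a multiple of `v` so that it becomes orthogonal to `u`
  refine ⟨u, z + B u z • v, ?_⟩
  ext i j
  fin_cases i <;> fin_cases j <;>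
    simp [gram, hvu, hwu, hvz, hwz, hvw, ← hB.neg_eq v u, ← hB.neg_eq w u, ← hB.neg_eq v z,
      ← hB.neg_eq w z, ← hB.neg_eq v w, ← hB.neg_eq u z, hB.self_eq_zero]

theorem exists_isometry_apply_eq_of_isotropic (hB : B.IsAlt) (hBn : B.Nondegenerate)
    {v w v' w' : V} (h : LinearIndependent K ![v, w]) (h' : LinearIndependent K ![v', w'])
    (hvw : B v w = 0) (hvw' : B v' w' = 0) :
    ∃ g : V ≃ₗ[K] V, (∀ x y, B (g x) (g y) = B x y) ∧ g v = v' ∧ g w = w' := by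
  obtain ⟨u, z, hs⟩ := exists_gram_eq_of_isotropic hB hBn h hvw
  obtain ⟨u', z', hs'⟩ := exists_gram_eq_of_isotropic hB hBn h' hvw'
  have hdet : (B.gram ![v, w, u, z]).det ≠ 0 := by
    simp [hs, Matrix.det_succ_row_zero, Fin.sum_univ_succ, Fin.succAbove]
  have hdet' : (B.gram ![v', w', u', z']).det ≠ 0 := hs' ▸ hs ▸ hdet
  obtain ⟨g₂, hg₂⟩ := exists_isometry_of_finrank_eq (hB.restrict _) (hB.restrict _)
    (nondegenerate_restrict_orthogonal hBn hB.isRefl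
      (nondegenerate_restrict_span_of_det_gram_ne_zero hdet))
    (nondegenerate_restrict_orthogonal hBn hB.isRefl
      (nondegenerate_restrict_span_of_det_gram_ne_zero hdet'))
    (by rw [finrank_orthogonal_span_of_det_gram_ne_zero hBn hdet,
      finrank_orthogonal_span_of_det_gram_ne_zero hBn hdet'])
  obtain ⟨g, hg, hgs⟩ := exists_isometry_of_gram_eq hB.isRefl hB.isRefl hdet (hs'.trans hs.symm)
    g₂ hg₂
  exact ⟨g, hg, hgs 0, hgs 1⟩

end Symplectic

section Isotropic

def IsTotallyIsotropic (B : LinearMap.BilinForm K V) (W : Submodule K V) : Prop :=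
  ∀ x ∈ W, ∀ y ∈ W, B x y = 0

variable {B : LinearMap.BilinForm K V}

theorem isTotallyIsotropic_span {s : ι → V} (h : ∀ i j, B (s i) (s j) = 0) :
    B.IsTotallyIsotropic (span K (Set.range s)) := by
  have hle : span K (Set.range s) ≤ B.orthogonal (span K (Set.range s)) :=
    span_le.2 <| Set.range_subset_iff.2 fun j _ hn =>
      (span_le (p := LinearMap.ker (B.flip (s j)))).2 (Set.range_subset_iff.2 fun i => h i j) hn
  exact fun x hx y hy => hle hy x hx

theorem isTotallyIsotropic_span_pair (hB : B.IsAlt) {v w : V} (h : B v w = 0) :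
    B.IsTotallyIsotropic (span K (Set.range ![v, w])) :=
  isTotallyIsotropic_span fun i j => by
    fin_cases i <;> fin_cases j <;> simp [h, ← hB.neg_eq v w, hB.self_eq_zero]

theorem IsTotallyIsotropic.map {B' : LinearMap.BilinForm K V'} {W : Submodule K V}
    (hW : B.IsTotallyIsotropic W) {g : V ≃ₗ[K] V'} (hg : ∀ x y, B' (g x) (g y) = B x y) :
    B'.IsTotallyIsotropic (W.map (g : V →ₗ[K] V')) := by
  rintro _ ⟨x, hx, rfl⟩ _ ⟨y, hy, rfl⟩
  simpa [hg] using hW x hx y hy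

end Isotropic

end LinearMap.BilinForm

section Orbit

open LinearMap.BilinForm

variable {K V : Type*} [Field K] [AddCommGroup V] [Module K V] {B : LinearMap.BilinForm K V}

theorem exists_isometry_map_eq_of_isTotallyIsotropic [FiniteDimensional K V] (hB : B.IsAlt)
    (hBn : B.Nondegenerate) {F E F' E' : Submodule K V} (h : IsLineInPlane F E)
    (hE : B.IsTotallyIsotropic E) (h' : IsLineInPlane F' E') (hE' : B.IsTotallyIsotropic E') :
    ∃ g : V ≃ₗ[K] V, (∀ x y, B (g x) (g y) = B x y) ∧
      E.map (g : V →ₗ[K] V) = E' ∧ F.map (g : V →ₗ[K] V) = F' := by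
  obtain ⟨v, w, hvw, rfl, rfl⟩ := h.exists_linearIndependent
  obtain ⟨v', w', hvw', rfl, rfl⟩ := h'.exists_linearIndependent
  obtain ⟨g, hg, rfl, rfl⟩ := exists_isometry_apply_eq_of_isotropic hB hBn hvw hvw'
    (hE v (subset_span ⟨0, rfl⟩) w (subset_span ⟨1, rfl⟩))
    (hE' v' (subset_span ⟨0, rfl⟩) w' (subset_span ⟨1, rfl⟩))
  refine ⟨g, hg, ?_, ?_⟩ <;> simp only [map_span] <;> simp [Set.image_insert_eq]

theorem exists_isLineInPlane_isTotallyIsotropic [FiniteDimensional K V] (hB : B.IsAlt)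
    (hV : 2 < finrank K V) :
    ∃ F E : Submodule K V, IsLineInPlane F E ∧ B.IsTotallyIsotropic E := by
  have : Nontrivial V := finrank_pos_iff (R := K).mp (by omega)
  obtain ⟨v, hv⟩ := exists_ne (0 : V)
  obtain ⟨w, hw, hwv⟩ : ∃ w ∈ LinearMap.ker (B v), w ∉ span K {v} := by
    refine SetLike.not_le_iff_exists.mp fun hle => ?_
    have hker := Submodule.finrank_mono hle
    have hrange : finrank K (LinearMap.range (B v)) ≤ 1 :=
      (Submodule.finrank_le _).trans (by simp)
    have := (B v).finrank_range_add_finrank_ker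
    rw [finrank_span_singleton hv] at hker
    omega
  have hvw : LinearIndependent K ![v, w] := (LinearIndependent.pair_iff' hv).2 fun a ha =>
    hwv (ha ▸ smul_mem _ _ (mem_span_singleton_self v))
  exact ⟨_, _, isLineInPlane_span_pair hvw, isTotallyIsotropic_span_pair hB hw⟩

theorem exists_isLineInPlane_not_isTotallyIsotropic [Nontrivial V] (hB : B.IsAlt)
    (hBn : B.Nondegenerate) :
    ∃ F E : Submodule K V, IsLineInPlane F E ∧ ¬ B.IsTotallyIsotropic E := by
  obtain ⟨v, u, hvu⟩ := exists_apply_eq_one hBn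
  have h : LinearIndependent K ![v, u] := linearIndependent_of_det_gram_ne_zero (B := B)
    (by simp [gram_pair_of_apply_eq_one hB hvu, Matrix.det_fin_two])
  refine ⟨_, _, isLineInPlane_span_pair h, fun hE => ?_⟩
  simpa [hvu] using hE v (subset_span ⟨0, rfl⟩) u (subset_span ⟨1, rfl⟩)

end Orbit

/-- Let `ω` be a nondegenerate alternating form on `ℂ^{2n}` (`n ≥ 2`). The set of flags
`(E, F)`, `F ⊂ E`, `dim F = 1`, `dim E = 2`, with `E` isotropic, is a nonempty proper
`Sp(ω)`-stable subset of the flag variety, a single `Sp(ω)`-orbit, and it is closed: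
in the chart of linearly independent pairs `(v, w)` spanning such flags, it is cut out
by the closed condition `ω v w = 0`. -/
theorem stmt_9 (n : ℕ) (hn : 2 ≤ n)
    (ω : LinearMap.BilinForm ℂ (Fin (2 * n) → ℂ))
    (halt : ω.IsAlt) (hnd : ω.Nondegenerate) :
    let Fl : Set (Submodule ℂ (Fin (2 * n) → ℂ) × Submodule ℂ (Fin (2 * n) → ℂ)) :=
      {p | p.2 ≤ p.1 ∧ finrank ℂ p.2 = 1 ∧ finrank ℂ p.1 = 2}
    let Z : Set (Submodule ℂ (Fin (2 * n) → ℂ) × Submodule ℂ (Fin (2 * n) → ℂ)) :=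
      {p ∈ Fl | ∀ x ∈ p.1, ∀ y ∈ p.1, ω x y = 0}
    Z.Nonempty ∧ Z ⊂ Fl ∧
    (∀ g : (Fin (2 * n) → ℂ) ≃ₗ[ℂ] (Fin (2 * n) → ℂ),
      (∀ x y, ω (g x) (g y) = ω x y) → ∀ p ∈ Z,
        (Submodule.map (g : (Fin (2 * n) → ℂ) →ₗ[ℂ] (Fin (2 * n) → ℂ)) p.1,
         Submodule.map (g : (Fin (2 * n) → ℂ) →ₗ[ℂ] (Fin (2 * n) → ℂ)) p.2) ∈ Z) ∧
    (∀ p ∈ Z, ∀ q ∈ Z,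
      ∃ g : (Fin (2 * n) → ℂ) ≃ₗ[ℂ] (Fin (2 * n) → ℂ),
        (∀ x y, ω (g x) (g y) = ω x y) ∧
        Submodule.map (g : (Fin (2 * n) → ℂ) →ₗ[ℂ] (Fin (2 * n) → ℂ)) p.1 = q.1 ∧
        Submodule.map (g : (Fin (2 * n) → ℂ) →ₗ[ℂ] (Fin (2 * n) → ℂ)) p.2 = q.2) ∧
    IsClosed {q : {p : (Fin (2 * n) → ℂ) × (Fin (2 * n) → ℂ) //
        LinearIndependent ℂ ![p.1, p.2]} | ω q.val.1 q.val.2 = 0} := by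
  intro Fl Z
  have hdim : 2 < finrank ℂ (Fin (2 * n) → ℂ) := by rw [Module.finrank_fin_fun]; omega
  have : Nontrivial (Fin (2 * n) → ℂ) := finrank_pos_iff (R := ℂ).mp (by omega)
  refine ⟨?_, ?_, ?_, ?_, ?_⟩
  · obtain ⟨F, E, hFE, hE⟩ := exists_isLineInPlane_isTotallyIsotropic halt hdim
    exact ⟨(E, F), hFE, hE⟩
  · refine (Set.ssubset_iff_of_subset fun p hp => hp.1).2 ?_
    obtain ⟨F, E, hFE, hE⟩ := exists_isLineInPlane_not_isTotallyIsotropic halt hnd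
    exact ⟨(E, F), hFE, fun hZ => hE hZ.2⟩
  · rintro g hg p ⟨hp : IsLineInPlane p.2 p.1, hpZ : ω.IsTotallyIsotropic p.1⟩
    exact ⟨hp.map g, hpZ.map hg⟩
  · rintro p ⟨hp, hpZ⟩ q ⟨hq, hqZ⟩
    exact exists_isometry_map_eq_of_isTotallyIsotropic halt hnd hp hpZ hq hqZ
  · exact isClosed_eq (by fun_prop) continuous_const
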